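/- Consider the five-point metric space on {a, b, c, z₁, z₂} with d(a,b) = d(a,c) = d(b,c) = 2, d(z₁,z₂) = 2, and d(x, z_j) = 1 for every x ∈ {a, b, c} and j ∈ {1, 2} (the shortest-path metric of the complete bipartite graph K_{2,3}). This d is a metric, and it is not L1-embeddable: there is no measure space (Ω, 𝒜, μ) and map φ from {a, b, c, z₁, z₂} to L1(μ) with ‖φ(x) − φ(y)‖ = d(x, y) for all x, y. -/
import Mathlib

open MeasureTheory

/-- The shortest-path metric of the complete bipartite graph `K_{2,3}` on five points
`a = 0, b = 1, c = 2, z₁ = 3, z₂ = 4`: distinct points on the same side are at distance 2,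
points on opposite sides at distance 1. -/
noncomputable def dK23 (x y : Fin 5) : ℝ :=
  if x = y then 0
  else if (x.val < 3 ∧ y.val < 3) ∨ (3 ≤ x.val ∧ 3 ≤ y.val) then 2
  else 1

/-- The pentagonal inequality on the real line. -/
lemma pentIneq (a b c z1 z2 : ℝ) :
    |a-b|+|a-c|+|b-c|+|z1-z2| ≤ |a-z1|+|a-z2|+|b-z1|+|b-z2|+|c-z1|+|c-z2| := by
  have t1 : ∀ x y : ℝ, |x - y| ≤ |x - z1| + |y - z1| := fun x y => by
    calc |x - y| ≤ |x - z1| + |z1 - y| := abs_sub_le _ _ _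
    _ = |x - z1| + |y - z1| := by rw [abs_sub_comm z1 y]
  have t2 : ∀ x y : ℝ, |x - y| ≤ |x - z2| + |y - z2| := fun x y => by
    calc |x - y| ≤ |x - z2| + |z2 - y| := abs_sub_le _ _ _
    _ = |x - z2| + |y - z2| := by rw [abs_sub_comm z2 y]
  have s : ∀ w : ℝ, |z1 - z2| ≤ |w - z1| + |w - z2| := fun w => by
    calc |z1 - z2| ≤ |z1 - w| + |w - z2| := abs_sub_le _ _ _
    _ = |w - z1| + |w - z2| := by rw [abs_sub_comm z1 w]
  have ha := abs_nonneg (z1 - z2)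
  rcases abs_cases (a-b) with ⟨h1,_⟩|⟨h1,_⟩ <;>
  rcases abs_cases (a-c) with ⟨h2,_⟩|⟨h2,_⟩ <;>
  rcases abs_cases (b-c) with ⟨h3,_⟩|⟨h3,_⟩ <;>
  [ (have u1 := t1 a c; have u2 := t2 a c; have u3 := s b; linarith);
    (have u1 := t1 a b; have u2 := t2 a b; have u3 := s c; linarith);
    (have u1 := t1 b c; have u2 := t2 b c; have u3 := s a; linarith);
    (have u1 := t1 b c; have u2 := t2 b c; have u3 := s a; linarith);
    (have u1 := t1 b c; have u2 := t2 b c; have u3 := s a; linarith);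
    (have u1 := t1 b c; have u2 := t2 b c; have u3 := s a; linarith);
    (have u1 := t1 a b; have u2 := t2 a b; have u3 := s c; linarith);
    (have u1 := t1 a c; have u2 := t2 a c; have u3 := s b; linarith) ]

/-- The `K_{2,3}` five-point metric is a metric but is not `L₁`-embeddable: there is no
measure space `(Ω, 𝒜, μ)` and map `φ` into `L₁(μ)` with `‖φ x − φ y‖ = dK23 x y`. -/
theorem K23_metric_not_L1.{u} :
    ((∀ x y : Fin 5, dK23 x y = 0 ↔ x = y) ∧
     (∀ x y : Fin 5, dK23 x y = dK23 y x) ∧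
     (∀ x y z : Fin 5, dK23 x z ≤ dK23 x y + dK23 y z)) ∧
    (∀ (Ω : Type u) (_ : MeasurableSpace Ω) (μ : Measure Ω)
      (φ : Fin 5 → Lp ℝ 1 μ),
      ¬ (∀ x y : Fin 5, ‖φ x - φ y‖ = dK23 x y)) := by
  constructor
  · refine ⟨?_, ?_, ?_⟩
    · intro x y; fin_cases x <;> fin_cases y <;> norm_num [dK23, Fin.ext_iff]
    · intro x y; fin_cases x <;> fin_cases y <;> norm_num [dK23, Fin.ext_iff]
    · intro x y z; fin_cases x <;> fin_cases y <;> fin_cases z <;>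
        norm_num [dK23, Fin.ext_iff]
  · intro Ω _ μ φ h
    have hnorm : ∀ x y : Fin 5,
        ‖φ x - φ y‖ = ∫ a, |(φ x : Ω → ℝ) a - (φ y : Ω → ℝ) a| ∂μ := by
      intro x y
      rw [MeasureTheory.L1.norm_eq_integral_norm (φ x - φ y)]
      apply integral_congr_ae
      filter_upwards [Lp.coeFn_sub (φ x) (φ y)] with a ha
      rw [ha, Real.norm_eq_abs, Pi.sub_apply]
    have hint : ∀ x y : Fin 5,
        Integrable (fun a => |(φ x : Ω → ℝ) a - (φ y : Ω → ℝ) a|) μ := by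
      intro x y
      apply (L1.integrable_coeFn (φ x - φ y)).abs.congr
      filter_upwards [Lp.coeFn_sub (φ x) (φ y)] with a ha
      rw [ha, Pi.sub_apply]
    have iL2 : Integrable (fun a =>
        |(φ 0 : Ω → ℝ) a - (φ 1 : Ω → ℝ) a| + |(φ 0 : Ω → ℝ) a - (φ 2 : Ω → ℝ) a|) μ :=
      (hint 0 1).add (hint 0 2)
    have iL3 : Integrable (fun a =>
        |(φ 0 : Ω → ℝ) a - (φ 1 : Ω → ℝ) a| + |(φ 0 : Ω → ℝ) a - (φ 2 : Ω → ℝ) a| +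
        |(φ 1 : Ω → ℝ) a - (φ 2 : Ω → ℝ) a|) μ := iL2.add (hint 1 2)
    have iL4 : Integrable (fun a =>
        |(φ 0 : Ω → ℝ) a - (φ 1 : Ω → ℝ) a| + |(φ 0 : Ω → ℝ) a - (φ 2 : Ω → ℝ) a| +
        |(φ 1 : Ω → ℝ) a - (φ 2 : Ω → ℝ) a| + |(φ 3 : Ω → ℝ) a - (φ 4 : Ω → ℝ) a|) μ :=
      iL3.add (hint 3 4)
    have iR2 : Integrable (fun a =>
        |(φ 0 : Ω → ℝ) a - (φ 3 : Ω → ℝ) a| + |(φ 0 : Ω → ℝ) a - (φ 4 : Ω → ℝ) a|) μ :=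
      (hint 0 3).add (hint 0 4)
    have iR3 : Integrable (fun a =>
        |(φ 0 : Ω → ℝ) a - (φ 3 : Ω → ℝ) a| + |(φ 0 : Ω → ℝ) a - (φ 4 : Ω → ℝ) a| +
        |(φ 1 : Ω → ℝ) a - (φ 3 : Ω → ℝ) a|) μ := iR2.add (hint 1 3)
    have iR4 : Integrable (fun a =>
        |(φ 0 : Ω → ℝ) a - (φ 3 : Ω → ℝ) a| + |(φ 0 : Ω → ℝ) a - (φ 4 : Ω → ℝ) a| +
        |(φ 1 : Ω → ℝ) a - (φ 3 : Ω → ℝ) a| + |(φ 1 : Ω → ℝ) a - (φ 4 : Ω → ℝ) a|) μ :=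
      iR3.add (hint 1 4)
    have iR5 : Integrable (fun a =>
        |(φ 0 : Ω → ℝ) a - (φ 3 : Ω → ℝ) a| + |(φ 0 : Ω → ℝ) a - (φ 4 : Ω → ℝ) a| +
        |(φ 1 : Ω → ℝ) a - (φ 3 : Ω → ℝ) a| + |(φ 1 : Ω → ℝ) a - (φ 4 : Ω → ℝ) a| +
        |(φ 2 : Ω → ℝ) a - (φ 3 : Ω → ℝ) a|) μ := iR4.add (hint 2 3)
    have iR6 : Integrable (fun a =>
        |(φ 0 : Ω → ℝ) a - (φ 3 : Ω → ℝ) a| + |(φ 0 : Ω → ℝ) a - (φ 4 : Ω → ℝ) a| +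
        |(φ 1 : Ω → ℝ) a - (φ 3 : Ω → ℝ) a| + |(φ 1 : Ω → ℝ) a - (φ 4 : Ω → ℝ) a| +
        |(φ 2 : Ω → ℝ) a - (φ 3 : Ω → ℝ) a| + |(φ 2 : Ω → ℝ) a - (φ 4 : Ω → ℝ) a|) μ :=
      iR5.add (hint 2 4)
    have big := integral_mono iL4 iR6 (fun a =>
      pentIneq ((φ 0 : Ω → ℝ) a) ((φ 1 : Ω → ℝ) a) ((φ 2 : Ω → ℝ) a)
        ((φ 3 : Ω → ℝ) a) ((φ 4 : Ω → ℝ) a))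
    rw [integral_add iL3 (hint 3 4), integral_add iL2 (hint 1 2),
        integral_add (hint 0 1) (hint 0 2),
        integral_add iR5 (hint 2 4), integral_add iR4 (hint 2 3),
        integral_add iR3 (hint 1 4), integral_add iR2 (hint 1 3),
        integral_add (hint 0 3) (hint 0 4)] at big
    have h01 := h 0 1; have h02 := h 0 2; have h12 := h 1 2; have h34 := h 3 4
    have h03 := h 0 3; have h04 := h 0 4; have h13 := h 1 3; have h14 := h 1 4
    have h23 := h 2 3; have h24 := h 2 4
    rw [hnorm] at h01 h02 h12 h34 h03 h04 h13 h14 h23 h24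
    norm_num [dK23, Fin.ext_iff, show ((3:Fin 5):ℕ) = 3 from rfl,
      show ((4:Fin 5):ℕ) = 4 from rfl] at h01 h02 h12 h34 h03 h04 h13 h14 h23 h24
    linarith
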